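/- arXiv:0907.2297 — 4 statements merged into one kernel-verified Lean document; each statement's English description precedes it below -/
import Mathlib

section
/- Let n₀ ≥ 2, let (u_j)_{j≥n₀} and (β_j)_{j≥n₀} be nonnegative sequences with ∑_{j≥n₀} j β_j u_j < ∞, let k_{i,j} satisfy k_{i,j} ≥ 0, k_{i,j} = 0 for i ≥ j, k_{i,j} = k_{j−i,j} and ∑_{i=1}^{j−1} k_{i,j} = 1 (hence 2∑_{i=1}^{j−1} i k_{i,j} = j), and let (φ_i)_{i≥1} be a sequence with |φ_i| ≤ C i for some C. Then 2 ∑_{i=n₀}^∞ φ_i ∑_{j>i} β_j k_{i,j} u_j − ∑_{i=n₀}^∞ β_i u_i φ_i = 2 ∑_{j=n₀+1}^∞ ∑_{i=n₀}^{j−1} i k_{i,j} β_j u_j (φ_i/i − φ_j/j) − 2 ∑_{j=n₀}^∞ ∑_{i=1}^{n₀−1} i k_{i,j} β_j u_j (φ_j/j). -/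
/-!
Both sides are series over the size `j` of the breaking polymer. The moment identity
`2 ∑_{i<j} i k_{i,j} = j`, which follows from the symmetry `k_{i,j} = k_{j-i,j}` and the
normalization of `k`, together with `|φ_i| ≤ C i` bounds every `j`-th term by a multiple of
`j β_j u_j`. This justifies exchanging the order of summation in the gain term, after which the
identity holds term by term in `j`, where it is the moment identity split at `n₀`.
-/

open Finset

theorem two_mul_sum_Ico_mul_eq_of_symm (w : ℕ → ℝ) {j : ℕ}
    (hw : ∀ i ∈ Ico 1 j, w (j - i) = w i) :
    2 * ∑ i ∈ Ico 1 j, (i : ℝ) * w i = j * ∑ i ∈ Ico 1 j, w i := by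
  have hreflect : ∑ i ∈ Ico 1 j, (i : ℝ) * w i = ∑ i ∈ Ico 1 j, ((j : ℝ) - i) * w i := by
    have h := sum_Ico_reflect (fun i => (i : ℝ) * w i) 1 (Nat.le_succ j)
    rw [Nat.add_sub_cancel_left, Nat.add_sub_cancel] at h
    rw [← h]
    refine sum_congr rfl fun i hi => ?_
    rw [Nat.cast_sub (mem_Ico.mp hi).2.le, hw i hi]
  rw [two_mul]
  nth_rewrite 2 [hreflect]
  rw [← sum_add_distrib, mul_sum]
  exact sum_congr rfl fun i _ => by ring

theorem tsum_tsum_ite_mem_comm {α β : Type*} [DecidableEq β] {g : α → β → ℝ}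
    {s : α → Finset β} (habs : Summable fun j => ∑ i ∈ s j, |g j i|) :
    ∑' i, ∑' j, (if i ∈ s j then g j i else 0) = ∑' j, ∑ i ∈ s j, g j i := by
  set f : α → β → ℝ := fun j i => if i ∈ s j then g j i else 0
  have hf0 : ∀ j, ∀ i ∉ s j, f j i = 0 := fun j i hi => if_neg hi
  have hrow : ∀ F : ℝ → ℝ, F 0 = 0 → ∀ j, ∑' i, F (f j i) = ∑ i ∈ s j, F (g j i) := by
    intro F hF j
    rw [tsum_eq_sum fun i hi => by rw [hf0 j i hi, hF]]
    exact sum_congr rfl fun i hi => by rw [show f j i = g j i from if_pos hi]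
  have hsummable : Summable (Function.uncurry f) := by
    refine summable_abs_iff.mp ((summable_prod_of_nonneg fun _ => abs_nonneg _).mpr ⟨?_, ?_⟩)
    · exact fun j => summable_of_ne_finset_zero (s := s j) fun i hi => by
        simp [Function.uncurry, hf0 j i hi]
    · simpa only [Function.uncurry, hrow abs abs_zero] using habs
  rw [hsummable.tsum_comm]
  exact tsum_congr (hrow id rfl)

theorem summable_of_abs_le_mul_of_lt_eq_zero {n₀ : ℕ} {m f : ℕ → ℝ} {D : ℝ}
    (hm : Summable fun j => if n₀ ≤ j then m j else 0) (hf0 : ∀ j, j < n₀ → f j = 0)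
    (hf : ∀ j, n₀ ≤ j → |f j| ≤ D * m j) : Summable f := by
  refine (hm.mul_left D).of_norm_bounded fun j => ?_
  rw [Real.norm_eq_abs]
  by_cases hj : n₀ ≤ j
  · simpa only [if_pos hj] using hf j hj
  · simp [if_neg hj, hf0 j (by omega)]

namespace Fragmentation

variable {n₀ : ℕ} {u β φ : ℕ → ℝ} {k : ℕ → ℕ → ℝ} {C : ℝ}

theorem two_mul_sum_moment_eq
    (hksymm : ∀ i j, 1 ≤ i → i ≤ j - 1 → k i j = k (j - i) j)
    (hknorm : ∀ j, 2 ≤ j → ∑ i ∈ Ico 1 j, k i j = 1) {j : ℕ} (hj : 2 ≤ j) :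
    2 * ∑ i ∈ Ico 1 j, (i : ℝ) * k i j = j := by
  rw [two_mul_sum_Ico_mul_eq_of_symm (k · j), hknorm j hj, mul_one]
  intro i hi
  obtain ⟨hi1, hij⟩ := mem_Ico.mp hi
  exact (hksymm i j hi1 (by omega)).symm

theorem sum_moment_le_half (hk0 : ∀ i j, 0 ≤ k i j)
    (hksymm : ∀ i j, 1 ≤ i → i ≤ j - 1 → k i j = k (j - i) j)
    (hknorm : ∀ j, 2 ≤ j → ∑ i ∈ Ico 1 j, k i j = 1) {j : ℕ} (hj : 2 ≤ j)
    {s : Finset ℕ} (hs : s ⊆ Ico 1 j) :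
    ∑ i ∈ s, (i : ℝ) * k i j ≤ j / 2 := by
  have hmono := sum_le_sum_of_subset_of_nonneg hs fun i _ _ =>
    mul_nonneg (Nat.cast_nonneg i) (hk0 i j)
  linarith [two_mul_sum_moment_eq hksymm hknorm hj]

theorem two_mul_gain_sub_loss_eq (hn₀ : 2 ≤ n₀) (u β φ : ℕ → ℝ)
    (hksymm : ∀ i j, 1 ≤ i → i ≤ j - 1 → k i j = k (j - i) j)
    (hknorm : ∀ j, 2 ≤ j → ∑ i ∈ Ico 1 j, k i j = 1) (j : ℕ) :
    2 * ∑ i ∈ Ico n₀ j, φ i * (β j * k i j * u j)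
        - (if n₀ ≤ j then β j * u j * φ j else 0)
      = 2 * (if n₀ + 1 ≤ j then
          ∑ i ∈ Ico n₀ j, (i : ℝ) * k i j * β j * u j * (φ i / i - φ j / j) else 0)
        - 2 * (if n₀ ≤ j then
          (∑ i ∈ Ico 1 n₀, (i : ℝ) * k i j) * β j * u j * (φ j / j) else 0) := by
  by_cases hj : n₀ ≤ j
  · have hj0 : (j : ℝ) ≠ 0 := by norm_cast; omega
    have hright : (if n₀ + 1 ≤ j then
        ∑ i ∈ Ico n₀ j, (i : ℝ) * k i j * β j * u j * (φ i / i - φ j / j) else 0)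
        = ∑ i ∈ Ico n₀ j, (i : ℝ) * k i j * β j * u j * (φ i / i - φ j / j) := by
      split_ifs with h
      · rfl
      · rw [Ico_eq_empty_of_le (by omega), sum_empty]
    have hterm : ∀ i ∈ Ico n₀ j, (i : ℝ) * k i j * β j * u j * (φ i / i - φ j / j)
        = φ i * (β j * k i j * u j) - (i : ℝ) * k i j * (β j * u j * φ j / j) := by
      intro i hi
      have hi0 : (i : ℝ) ≠ 0 := by norm_cast; have := (mem_Ico.mp hi).1; omega
      field_simp
    have hmoment := two_mul_sum_moment_eq hksymm hknorm (hn₀.trans hj)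
    rw [← sum_Ico_consecutive _ (by omega) hj] at hmoment
    rw [hright, if_pos hj, if_pos hj, sum_congr rfl hterm, sum_sub_distrib, ← sum_mul]
    generalize ∑ i ∈ Ico n₀ j, φ i * (β j * k i j * u j) = gain
    field_simp
    linear_combination (β j * u j * φ j) * hmoment
  · have hj' : ¬ n₀ + 1 ≤ j := by omega
    rw [if_neg hj, if_neg hj, if_neg hj', Ico_eq_empty_of_le (by omega), sum_empty]
    ring

theorem summable_gain_abs (hn₀ : 2 ≤ n₀) (hu : ∀ j, 0 ≤ u j) (hβ : ∀ j, 0 ≤ β j)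
    (hsum : Summable fun j : ℕ => if n₀ ≤ j then (j : ℝ) * β j * u j else 0)
    (hk0 : ∀ i j, 0 ≤ k i j)
    (hksymm : ∀ i j, 1 ≤ i → i ≤ j - 1 → k i j = k (j - i) j)
    (hknorm : ∀ j, 2 ≤ j → ∑ i ∈ Ico 1 j, k i j = 1) (hφ : ∀ i, |φ i| ≤ C * i) :
    Summable fun j => ∑ i ∈ Ico n₀ j, |φ i * (β j * k i j * u j)| := by
  have hC : 0 ≤ C := (abs_nonneg _).trans (by simpa using hφ 1)
  refine summable_of_abs_le_mul_of_lt_eq_zero (D := C / 2) hsum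
    (fun j hj => by rw [Ico_eq_empty_of_le hj.le, sum_empty]) fun j hj => ?_
  rw [abs_of_nonneg (sum_nonneg fun _ _ => abs_nonneg _)]
  calc ∑ i ∈ Ico n₀ j, |φ i * (β j * k i j * u j)|
      ≤ ∑ i ∈ Ico n₀ j, C * (β j * u j) * ((i : ℝ) * k i j) := by
        refine sum_le_sum fun i _ => ?_
        have hx : 0 ≤ β j * k i j * u j := mul_nonneg (mul_nonneg (hβ j) (hk0 i j)) (hu j)
        rw [abs_mul, abs_of_nonneg hx]
        exact (mul_le_mul_of_nonneg_right (hφ i) hx).trans_eq (by ring)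
    _ ≤ C * (β j * u j) * (j / 2) := by
        rw [← mul_sum]
        exact mul_le_mul_of_nonneg_left
          (sum_moment_le_half hk0 hksymm hknorm (hn₀.trans hj) (Ico_subset_Ico (by omega) le_rfl))
          (mul_nonneg hC (mul_nonneg (hβ j) (hu j)))
    _ = C / 2 * (j * β j * u j) := by ring

theorem summable_loss (hu : ∀ j, 0 ≤ u j) (hβ : ∀ j, 0 ≤ β j)
    (hsum : Summable fun j : ℕ => if n₀ ≤ j then (j : ℝ) * β j * u j else 0)
    (hφ : ∀ i, |φ i| ≤ C * i) :
    Summable fun j => if n₀ ≤ j then β j * u j * φ j else 0 := by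
  refine summable_of_abs_le_mul_of_lt_eq_zero (D := C) hsum
    (fun j hj => if_neg (by omega)) fun j hj => ?_
  have hw : 0 ≤ β j * u j := mul_nonneg (hβ j) (hu j)
  rw [if_pos hj, abs_mul, abs_of_nonneg hw]
  exact (mul_le_mul_of_nonneg_left (hφ j) hw).trans_eq (by ring)

theorem summable_small_fragments (hn₀ : 2 ≤ n₀) (hu : ∀ j, 0 ≤ u j) (hβ : ∀ j, 0 ≤ β j)
    (hsum : Summable fun j : ℕ => if n₀ ≤ j then (j : ℝ) * β j * u j else 0)
    (hk0 : ∀ i j, 0 ≤ k i j)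
    (hksymm : ∀ i j, 1 ≤ i → i ≤ j - 1 → k i j = k (j - i) j)
    (hknorm : ∀ j, 2 ≤ j → ∑ i ∈ Ico 1 j, k i j = 1) (hφ : ∀ i, |φ i| ≤ C * i) :
    Summable fun j => if n₀ ≤ j then
      (∑ i ∈ Ico 1 n₀, (i : ℝ) * k i j) * β j * u j * (φ j / j) else 0 := by
  refine summable_of_abs_le_mul_of_lt_eq_zero (D := C / 2) hsum
    (fun j hj => if_neg (by omega)) fun j hj => ?_
  have hj0 : (0 : ℝ) < j := by norm_cast; omega
  have hw : 0 ≤ β j * u j := mul_nonneg (hβ j) (hu j)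
  have hφj : |φ j / j| ≤ C := by
    rw [abs_div, Nat.abs_cast, div_le_iff₀ hj0]
    exact hφ j
  have hm := sum_moment_le_half hk0 hksymm hknorm (hn₀.trans hj) (Ico_subset_Ico le_rfl hj)
  have hm0 : 0 ≤ ∑ i ∈ Ico 1 n₀, (i : ℝ) * k i j :=
    sum_nonneg fun i _ => mul_nonneg (Nat.cast_nonneg i) (hk0 i j)
  rw [if_pos hj, mul_assoc _ (β j), abs_mul, abs_mul, abs_of_nonneg hm0, abs_of_nonneg hw]
  calc _ ≤ j / 2 * (β j * u j) * C :=
        mul_le_mul (mul_le_mul_of_nonneg_right hm hw) hφj (abs_nonneg _)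
          (mul_nonneg (by positivity) hw)
    _ = C / 2 * (j * β j * u j) := by ring

theorem tsum_gain_eq
    (hgain : Summable fun j => ∑ i ∈ Ico n₀ j, |φ i * (β j * k i j * u j)|) :
    (∑' i, if n₀ ≤ i then φ i * ∑' j, (if i < j then β j * k i j * u j else 0) else 0)
      = ∑' j, ∑ i ∈ Ico n₀ j, φ i * (β j * k i j * u j) := by
  rw [← tsum_tsum_ite_mem_comm hgain]
  refine tsum_congr fun i => ?_
  by_cases hi : n₀ ≤ i
  · rw [if_pos hi, ← tsum_mul_left]
    exact tsum_congr fun j => by by_cases hij : i < j <;> simp [hi, hij]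
  · simp [hi]

end Fragmentation

open Fragmentation

theorem fragmentation_rearrangement_general (n₀ : ℕ) (hn₀ : 2 ≤ n₀)
    (u β : ℕ → ℝ) (hu : ∀ j, 0 ≤ u j) (hβ : ∀ j, 0 ≤ β j)
    (hsum : Summable fun j : ℕ => if n₀ ≤ j then (j : ℝ) * β j * u j else 0)
    (k : ℕ → ℕ → ℝ)
    (hk0 : ∀ i j, 0 ≤ k i j)
    (hksymm : ∀ i j, 1 ≤ i → i ≤ j - 1 → k i j = k (j - i) j)
    (hknorm : ∀ j, 2 ≤ j → ∑ i ∈ Finset.Ico 1 j, k i j = 1)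
    (φ : ℕ → ℝ) (C : ℝ) (hφ : ∀ i, |φ i| ≤ C * i) :
    2 * (∑' i, if n₀ ≤ i then φ i * ∑' j, (if i < j then β j * k i j * u j else 0) else 0)
      - (∑' i, if n₀ ≤ i then β i * u i * φ i else 0)
    = 2 * (∑' j, if n₀ + 1 ≤ j then
          ∑ i ∈ Finset.Ico n₀ j, (i : ℝ) * k i j * β j * u j * (φ i / i - φ j / j)
        else 0)
      - 2 * ∑' j, (if n₀ ≤ j then
          (∑ i ∈ Finset.Ico 1 n₀, (i : ℝ) * k i j) * β j * u j * (φ j / j) else 0) := by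
  have hgain_abs := summable_gain_abs hn₀ hu hβ hsum hk0 hksymm hknorm hφ
  have hgain : Summable fun j => ∑ i ∈ Ico n₀ j, φ i * (β j * k i j * u j) :=
    hgain_abs.of_norm_bounded fun j => abs_sum_le_sum_abs _ _
  have hloss := summable_loss hu hβ hsum hφ
  have hsmall := summable_small_fragments hn₀ hu hβ hsum hk0 hksymm hknorm hφ
  have hcol := two_mul_gain_sub_loss_eq hn₀ u β φ hksymm hknorm
  have hright : Summable fun j => if n₀ + 1 ≤ j then
      ∑ i ∈ Ico n₀ j, (i : ℝ) * k i j * β j * u j * (φ i / i - φ j / j) else 0 :=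
    ((((hgain.mul_left 2).sub hloss).add (hsmall.mul_left 2)).div_const 2).congr fun j => by
      linarith [hcol j]
  rw [tsum_gain_eq hgain_abs, ← tsum_mul_left, ← tsum_mul_left, ← tsum_mul_left,
    ← (hgain.mul_left 2).tsum_sub hloss, ← (hright.mul_left 2).tsum_sub (hsmall.mul_left 2)]
  exact tsum_congr hcol

/-- rearrangement of the fragmentation terms: with `n₀ ≥ 2`, nonnegative
sequences `u, β` with `∑_{j ≥ n₀} j β_j u_j < ∞`, a fragmentation kernel `k` satisfying
nonnegativity, vanishing for `i ≥ j`, symmetry and normalization (hence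
`2 ∑_{i=1}^{j-1} i k_{i,j} = j`), and weights `|φ_i| ≤ C i`, one has
`2 ∑_{i ≥ n₀} φ_i ∑_{j > i} β_j k_{i,j} u_j - ∑_{i ≥ n₀} β_i u_i φ_i
  = 2 ∑_{j ≥ n₀+1} ∑_{i=n₀}^{j-1} i k_{i,j} β_j u_j (φ_i/i - φ_j/j)
    - 2 ∑_{j ≥ n₀} ∑_{i=1}^{n₀-1} i k_{i,j} β_j u_j (φ_j/j)`. -/
theorem fragmentation_rearrangement (n₀ : ℕ) (hn₀ : 2 ≤ n₀)
    (u β : ℕ → ℝ) (hu : ∀ j, 0 ≤ u j) (hβ : ∀ j, 0 ≤ β j)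
    (hsum : Summable fun j : ℕ => if n₀ ≤ j then (j : ℝ) * β j * u j else 0)
    (k : ℕ → ℕ → ℝ)
    (hk0 : ∀ i j, 0 ≤ k i j)
    (hksupp : ∀ i j, j ≤ i → k i j = 0)
    (hksymm : ∀ i j, 1 ≤ i → i ≤ j - 1 → k i j = k (j - i) j)
    (hknorm : ∀ j, 2 ≤ j → ∑ i ∈ Finset.Ico 1 j, k i j = 1)
    (φ : ℕ → ℝ) (C : ℝ) (hφ : ∀ i, |φ i| ≤ C * i) :
    2 * (∑' i, if n₀ ≤ i then φ i * ∑' j, (if i < j then β j * k i j * u j else 0) else 0)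
      - (∑' i, if n₀ ≤ i then β i * u i * φ i else 0)
    = 2 * (∑' j, if n₀ + 1 ≤ j then
          ∑ i ∈ Finset.Ico n₀ j, (i : ℝ) * k i j * β j * u j * (φ i / i - φ j / j)
        else 0)
      - 2 * ∑' j, (if n₀ ≤ j then
          (∑ i ∈ Finset.Ico 1 n₀, (i : ℝ) * k i j) * β j * u j * (φ j / j) else 0) :=
  fragmentation_rearrangement_general n₀ hn₀ u β hu hβ hsum k hk0 hksymm hknorm φ C hφ
end

section
/- Let (Pⁿ)_{n∈ℕ} and P be probability measures on ℝ with support contained in a fixed interval [a,b]. For each n let Fⁿ(x) = Pⁿ((−∞, x]) and Gⁿ(x) = ∫_{−∞}^x Fⁿ(s) ds, and similarly F, G for P. Then the following are equivalent: (1) Pⁿ → P weakly, i.e. ∫ f dPⁿ → ∫ f dP for every bounded continuous f on ℝ; (2) Fⁿ(x) → F(x) for every x at which F is continuous; (3) Gⁿ → G uniformly on compact subsets of ℝ. -/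
/-!
`(1) ⇔ (2)` is the portmanteau theorem on `ℝ`: the sets `Iic x` whose boundary `{x}` is
`P`-null have convergent measures, and conversely the intervals `Ioc u v` with endpoints at
continuity points of `F` (a dense set) form a π-system containing arbitrarily small
neighbourhoods of every point.

`(2) ⇒ (3)`: `F` has only countably many discontinuities, so `Fⁿ → F` almost everywhere and,
all `Fⁿ` vanishing to the left of `a`, dominated convergence gives `Gⁿ → G` pointwise. The `Gⁿ`
are `1`-Lipschitz, so the convergence is uniform on compact sets.

`(3) ⇒ (2)`: as `F` is monotone, the difference quotient of `G` between `x` and `y` lies between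
`F x` and `F y`. Letting `n → ∞` and then `y → x` squeezes `Fⁿ x` around `F x` whenever `F` is
continuous at `x`.
-/

open Filter MeasureTheory ProbabilityTheory Topology Set

lemma EquicontinuousOn.tendstoUniformlyOn_of_tendsto {ι X α : Type*} [TopologicalSpace X]
    [UniformSpace α] {F : ι → X → α} {f : X → α} {l : Filter ι} {K : Set X} (hK : IsCompact K)
    (hF : EquicontinuousOn F K) (h : ∀ x ∈ K, Tendsto (F · x) l (𝓝 (f x))) :
    TendstoUniformlyOn F f l K := by
  have hpi := (EquicontinuousOn.tendsto_uniformOnFun_iff_pi' (𝔖 := {K}) (by simpa using hK)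
    (by simpa using hF) l f).2 (by simpa [tendsto_pi_nhds] using h)
  exact UniformOnFun.tendsto_iff_tendstoUniformlyOn.1 hpi K rfl

section CDF

variable {μ : Measure ℝ}

lemma dense_setOf_continuousAt_cdf : Dense {x | ContinuousAt (cdf μ) x} := by
  simpa only [compl_ofPred, not_not] using
    (monotone_cdf μ).countable_not_continuousAt.dense_compl ℝ

variable [IsProbabilityMeasure μ]

lemma measure_singleton_eq_zero_of_continuousAt_cdf {x : ℝ} (hx : ContinuousAt (cdf μ) x) :
    μ {x} = 0 := by
  have h := (cdf μ).measure_singleton x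
  rwa [measure_cdf, hx.continuousWithinAt.leftLim_eq, sub_self, ENNReal.ofReal_zero] at h

lemma measureReal_Ioc_eq_cdf_sub_cdf {u v : ℝ} (huv : u ≤ v) :
    μ.real (Ioc u v) = cdf μ v - cdf μ u := by
  have h := (cdf μ).measure_Ioc u v
  rw [measure_cdf] at h
  rw [measureReal_def, h, ENNReal.toReal_ofReal (sub_nonneg.2 (monotone_cdf μ huv))]

end CDF

namespace MeasureTheory.ProbabilityMeasure

variable {ι : Type*} {l : Filter ι} {μs : ι → ProbabilityMeasure ℝ} {μ : ProbabilityMeasure ℝ}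

lemma tendsto_cdf_of_tendsto (h : Tendsto μs l (𝓝 μ)) {x : ℝ} (hx : ContinuousAt (cdf μ) x) :
    Tendsto (fun i => cdf (μs i) x) l (𝓝 (cdf μ x)) := by
  have hfrontier : (μ : Measure ℝ) (frontier (Iic x)) = 0 := by
    rw [frontier_Iic]; exact measure_singleton_eq_zero_of_continuousAt_cdf hx
  simp only [cdf_eq_real, measureReal_def]
  exact (ENNReal.tendsto_toReal (measure_ne_top _ _)).comp
    (ProbabilityMeasure.tendsto_measure_of_null_frontier_of_tendsto' h hfrontier)

lemma tendsto_of_tendsto_cdf [l.IsCountablyGenerated]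
    (h : ∀ x, ContinuousAt (cdf μ) x → Tendsto (fun i => cdf (μs i) x) l (𝓝 (cdf μ x))) :
    Tendsto μs l (𝓝 μ) := by
  set C := {x | ContinuousAt (cdf μ) x}
  have hC : Dense C := dense_setOf_continuousAt_cdf
  refine (isPiSystem_Ioc_mem C C).tendsto_probabilityMeasure_of_tendsto_of_mem ?_ ?_ ?_
  · rintro _ ⟨u, -, v, -, -, rfl⟩
    exact measurableSet_Ioc
  · intro U hU x hx
    obtain ⟨l', r', ⟨hl', hr'⟩, hU'⟩ := mem_nhds_iff_exists_Ioo_subset.1 (hU.mem_nhds hx)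
    obtain ⟨u, hu, hlu, hux⟩ := hC.exists_between hl'
    obtain ⟨v, hv, hxv, hvr⟩ := hC.exists_between hr'
    exact ⟨Ioc u v, ⟨u, hu, v, hv, hux.trans hxv, rfl⟩, Ioc_mem_nhds hux hxv,
      fun y hy => hU' ⟨hlu.trans hy.1, hy.2.trans_lt hvr⟩⟩
  · rintro _ ⟨u, hu, v, hv, huv, rfl⟩
    rw [← NNReal.tendsto_coe]
    simp only [← ProbabilityMeasure.measureReal_eq_coe_coeFn, measureReal_Ioc_eq_cdf_sub_cdf huv.le]
    exact (h v hv).sub (h u hu)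

lemma tendsto_iff_tendsto_cdf [l.IsCountablyGenerated] :
    Tendsto μs l (𝓝 μ) ↔
      ∀ x, ContinuousAt (cdf μ) x → Tendsto (fun i => cdf (μs i) x) l (𝓝 (cdf μ x)) :=
  ⟨fun h _ hx => tendsto_cdf_of_tendsto h hx, tendsto_of_tendsto_cdf⟩

end MeasureTheory.ProbabilityMeasure

lemma tendsto_integral_iff_tendsto_cdf {ι : Type*} {l : Filter ι} [l.IsCountablyGenerated]
    {μs : ι → Measure ℝ} [∀ i, IsProbabilityMeasure (μs i)] {μ : Measure ℝ}
    [IsProbabilityMeasure μ] :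
    (∀ f : ℝ → ℝ, Continuous f → (∃ C, ∀ x, |f x| ≤ C) →
        Tendsto (fun i => ∫ x, f x ∂μs i) l (𝓝 (∫ x, f x ∂μ))) ↔
      ∀ x, ContinuousAt (cdf μ) x → Tendsto (fun i => cdf (μs i) x) l (𝓝 (cdf μ x)) := by
  refine Iff.trans ?_ ((ProbabilityMeasure.tendsto_iff_forall_integral_tendsto
    (μs := fun i => ⟨μs i, inferInstance⟩) (μ := ⟨μ, inferInstance⟩)).symm.trans
    ProbabilityMeasure.tendsto_iff_tendsto_cdf)
  exact ⟨fun h f => h f f.continuous ⟨‖f‖, f.norm_coe_le_norm⟩,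
    fun h f hf ⟨C, hC⟩ => h (.ofNormedAddCommGroup f hf C hC)⟩

noncomputable def integratedCDF (μ : Measure ℝ) (x : ℝ) : ℝ := ∫ s in Iic x, cdf μ s

lemma integrableOn_indicator_Ici_Iic (a x : ℝ) :
    IntegrableOn ((Ici a).indicator (1 : ℝ → ℝ)) (Iic x) := by
  rw [IntegrableOn, integrable_indicator_iff measurableSet_Ici, IntegrableOn,
    Measure.restrict_restrict measurableSet_Ici, Ici_inter_Iic]
  exact integrableOn_const (by simp)

section IntegratedCDF

variable {μ : Measure ℝ} [IsProbabilityMeasure μ] {a : ℝ}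

lemma cdf_le_indicator_Ici (ha : μ (Iio a) = 0) (x : ℝ) : cdf μ x ≤ (Ici a).indicator 1 x := by
  by_cases hx : a ≤ x
  · simpa [hx] using cdf_le_one μ x
  · have : μ (Iic x) = 0 := measure_mono_null (Iic_subset_Iio.2 (not_le.1 hx)) ha
    simp [hx, cdf_eq_real, measureReal_def, this]

lemma integrableOn_cdf_Iic (ha : μ (Iio a) = 0) (x : ℝ) : IntegrableOn (cdf μ) (Iic x) :=
  (integrableOn_indicator_Ici_Iic a x).mono' (monotone_cdf μ).measurable.aestronglyMeasurable
    (ae_of_all _ fun s => by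
      rw [Real.norm_of_nonneg (cdf_nonneg μ s)]; exact cdf_le_indicator_Ici ha s)

lemma integratedCDF_sub_integratedCDF (ha : μ (Iio a) = 0) (x y : ℝ) :
    integratedCDF μ y - integratedCDF μ x = ∫ s in x..y, cdf μ s :=
  intervalIntegral.integral_Iic_sub_Iic (integrableOn_cdf_Iic ha x) (integrableOn_cdf_Iic ha y)

lemma lipschitzWith_integratedCDF (ha : μ (Iio a) = 0) : LipschitzWith 1 (integratedCDF μ) := by
  refine LipschitzWith.of_dist_le_mul fun y x => ?_
  rw [dist_eq_norm, integratedCDF_sub_integratedCDF ha, NNReal.coe_one, Real.dist_eq]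
  refine intervalIntegral.norm_integral_le_of_norm_le_const fun s _ => ?_
  rw [Real.norm_of_nonneg (cdf_nonneg μ s)]
  exact cdf_le_one μ s

lemma sub_mul_cdf_le_integratedCDF_sub (ha : μ (Iio a) = 0) {x y : ℝ} (hxy : x ≤ y) :
    (y - x) * cdf μ x ≤ integratedCDF μ y - integratedCDF μ x := by
  rw [integratedCDF_sub_integratedCDF ha, ← smul_eq_mul, ← intervalIntegral.integral_const]
  exact intervalIntegral.integral_mono_on hxy intervalIntegrable_const
    ((monotone_cdf μ).intervalIntegrable) fun s hs => monotone_cdf μ hs.1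

lemma integratedCDF_sub_le_sub_mul_cdf (ha : μ (Iio a) = 0) {x y : ℝ} (hxy : x ≤ y) :
    integratedCDF μ y - integratedCDF μ x ≤ (y - x) * cdf μ y := by
  rw [integratedCDF_sub_integratedCDF ha, ← smul_eq_mul, ← intervalIntegral.integral_const]
  exact intervalIntegral.integral_mono_on hxy ((monotone_cdf μ).intervalIntegrable)
    intervalIntegrable_const fun s hs => monotone_cdf μ hs.2

end IntegratedCDF

section Convergence

variable {ι : Type*} {l : Filter ι} {μs : ι → Measure ℝ} [∀ i, IsProbabilityMeasure (μs i)]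
  {μ : Measure ℝ} {a : ℝ}

lemma tendsto_integratedCDF_of_tendsto_cdf [l.IsCountablyGenerated] (hμs : ∀ i, μs i (Iio a) = 0)
    (h : ∀ x, ContinuousAt (cdf μ) x → Tendsto (fun i => cdf (μs i) x) l (𝓝 (cdf μ x)))
    (x : ℝ) : Tendsto (fun i => integratedCDF (μs i) x) l (𝓝 (integratedCDF μ x)) := by
  refine tendsto_integral_filter_of_dominated_convergence ((Ici a).indicator 1)
    (.of_forall fun i => (monotone_cdf (μs i)).measurable.aestronglyMeasurable)
    (.of_forall fun i => ae_of_all _ fun s => ?_) (integrableOn_indicator_Ici_Iic a x)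
    (ae_restrict_of_ae ?_)
  · rw [Real.norm_of_nonneg (cdf_nonneg _ s)]
    exact cdf_le_indicator_Ici (hμs i) s
  · filter_upwards [(monotone_cdf μ).countable_not_continuousAt.ae_notMem volume] with s hs
    exact h s (not_not.1 hs)

lemma tendstoUniformlyOn_integratedCDF_of_tendsto_cdf [l.IsCountablyGenerated]
    (hμs : ∀ i, μs i (Iio a) = 0)
    (h : ∀ x, ContinuousAt (cdf μ) x → Tendsto (fun i => cdf (μs i) x) l (𝓝 (cdf μ x)))
    {K : Set ℝ} (hK : IsCompact K) :
    TendstoUniformlyOn (fun i => integratedCDF (μs i)) (integratedCDF μ) l K :=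
  ((LipschitzWith.uniformEquicontinuous _ 1 fun i => lipschitzWith_integratedCDF (hμs i))
    |>.equicontinuous.equicontinuousOn K).tendstoUniformlyOn_of_tendsto hK
    fun x _ => tendsto_integratedCDF_of_tendsto_cdf hμs h x

lemma tendsto_cdf_of_tendsto_integratedCDF [IsProbabilityMeasure μ] (hμs : ∀ i, μs i (Iio a) = 0)
    (hμ : μ (Iio a) = 0)
    (h : ∀ x, Tendsto (fun i => integratedCDF (μs i) x) l (𝓝 (integratedCDF μ x)))
    {x : ℝ} (hx : ContinuousAt (cdf μ) x) :
    Tendsto (fun i => cdf (μs i) x) l (𝓝 (cdf μ x)) := by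
  refine tendsto_order.2 ⟨fun c hc => ?_, fun c hc => ?_⟩
  · obtain ⟨y, hcy, hyx⟩ := (((hx.eventually (lt_mem_nhds hc)).filter_mono nhdsWithin_le_nhds).and
      (self_mem_nhdsWithin (s := Iio x))).exists
    have hlim : (x - y) * c < integratedCDF μ x - integratedCDF μ y :=
      (mul_lt_mul_of_pos_left hcy (sub_pos.2 hyx)).trans_le
        (sub_mul_cdf_le_integratedCDF_sub hμ hyx.le)
    filter_upwards [((h x).sub (h y)).eventually (lt_mem_nhds hlim)] with i hi
    exact lt_of_mul_lt_mul_left (hi.trans_le (integratedCDF_sub_le_sub_mul_cdf (hμs i) hyx.le))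
      (sub_pos.2 hyx).le
  · obtain ⟨y, hcy, hxy⟩ := (((hx.eventually (gt_mem_nhds hc)).filter_mono nhdsWithin_le_nhds).and
      (self_mem_nhdsWithin (s := Ioi x))).exists
    have hlim : integratedCDF μ y - integratedCDF μ x < (y - x) * c :=
      (integratedCDF_sub_le_sub_mul_cdf hμ hxy.le).trans_lt
        (mul_lt_mul_of_pos_left hcy (sub_pos.2 hxy))
    filter_upwards [((h y).sub (h x)).eventually (gt_mem_nhds hlim)] with i hi
    exact lt_of_mul_lt_mul_left ((sub_mul_cdf_le_integratedCDF_sub (hμs i) hxy.le).trans_lt hi)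
      (sub_pos.2 hxy).le

end Convergence

theorem cdf_characterizations_of_weak_convergence_general (a b : ℝ)
    (P : ℕ → Measure ℝ) (Plim : Measure ℝ)
    (hP : ∀ n, IsProbabilityMeasure (P n)) (hPlim : IsProbabilityMeasure Plim)
    (hPsupp : ∀ n, P n (Set.Icc a b)ᶜ = 0) (hPlimsupp : Plim (Set.Icc a b)ᶜ = 0) :
    ((∀ f : ℝ → ℝ, Continuous f → (∃ C, ∀ x, |f x| ≤ C) →
        Tendsto (fun n => ∫ x, f x ∂(P n)) atTop (𝓝 (∫ x, f x ∂Plim)))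
      ↔ (∀ x : ℝ, ContinuousAt (fun y => (Plim (Set.Iic y)).toReal) x →
          Tendsto (fun n => ((P n) (Set.Iic x)).toReal) atTop
            (𝓝 ((Plim (Set.Iic x)).toReal)))) ∧
    ((∀ x : ℝ, ContinuousAt (fun y => (Plim (Set.Iic y)).toReal) x →
        Tendsto (fun n => ((P n) (Set.Iic x)).toReal) atTop
          (𝓝 ((Plim (Set.Iic x)).toReal)))
      ↔ (∀ R : ℝ, 0 < R →
          TendstoUniformlyOn
            (fun n x => ∫ s in Set.Iic x, ((P n) (Set.Iic s)).toReal)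
            (fun x => ∫ s in Set.Iic x, (Plim (Set.Iic s)).toReal)
            atTop (Set.Icc (-R) R))) := by
  have hbelow {ν : Measure ℝ} (hν : ν (Icc a b)ᶜ = 0) : ν (Iio a) = 0 :=
    measure_mono_null (fun _ hx => fun h => not_le.2 hx h.1) hν
  -- after this rewrite the integrals in `(3)` are `integratedCDF` up to unfolding
  simp only [← measureReal_def, ← cdf_eq_real]
  refine ⟨tendsto_integral_iff_tendsto_cdf, fun h R _ => ?_, fun h x hx => ?_⟩
  · exact tendstoUniformlyOn_integratedCDF_of_tendsto_cdf (fun n => hbelow (hPsupp n)) h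
      isCompact_Icc
  · refine tendsto_cdf_of_tendsto_integratedCDF (fun n => hbelow (hPsupp n)) (hbelow hPlimsupp)
      (fun y => (h (|y| + 1) (by positivity)).tendsto_at ?_) hx
    exact ⟨by linarith [neg_abs_le y], by linarith [le_abs_self y]⟩

/-- Lemma A.3: for probability measures `Pⁿ, P` on `ℝ` supported in a
fixed interval `[a,b]`, with `Fⁿ, F` the repartition (cumulative distribution) functions
and `Gⁿ(x) = ∫_{-∞}^x Fⁿ`, `G(x) = ∫_{-∞}^x F`, the following are equivalent:
(1) `Pⁿ → P` weakly; (2) `Fⁿ(x) → F(x)` at every continuity point `x` of `F`;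
(3) `Gⁿ → G` uniformly on compact sets. -/
theorem cdf_characterizations_of_weak_convergence (a b : ℝ) (hab : a < b)
    (P : ℕ → Measure ℝ) (Plim : Measure ℝ)
    (hP : ∀ n, IsProbabilityMeasure (P n)) (hPlim : IsProbabilityMeasure Plim)
    (hPsupp : ∀ n, P n (Set.Icc a b)ᶜ = 0) (hPlimsupp : Plim (Set.Icc a b)ᶜ = 0) :
    ((∀ f : ℝ → ℝ, Continuous f → (∃ C, ∀ x, |f x| ≤ C) →
        Tendsto (fun n => ∫ x, f x ∂(P n)) atTop (𝓝 (∫ x, f x ∂Plim)))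
      ↔ (∀ x : ℝ, ContinuousAt (fun y => (Plim (Set.Iic y)).toReal) x →
          Tendsto (fun n => ((P n) (Set.Iic x)).toReal) atTop
            (𝓝 ((Plim (Set.Iic x)).toReal)))) ∧
    ((∀ x : ℝ, ContinuousAt (fun y => (Plim (Set.Iic y)).toReal) x →
        Tendsto (fun n => ((P n) (Set.Iic x)).toReal) atTop
          (𝓝 ((Plim (Set.Iic x)).toReal)))
      ↔ (∀ R : ℝ, 0 < R →
          TendstoUniformlyOn
            (fun n x => ∫ s in Set.Iic x, ((P n) (Set.Iic s)).toReal)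
            (fun x => ∫ s in Set.Iic x, (Plim (Set.Iic s)).toReal)
            atTop (Set.Icc (-R) R))) :=
  cdf_characterizations_of_weak_convergence_general a b P Plim hP hPlim hPsupp hPlimsupp
end

section
/- Let a < b and let G : ℝ → ℝ be a convex function. There exists a probability measure P on ℝ with support contained in [a,b] such that G(x) = ∫_{−∞}^x F(s) ds, where F(x) = P((−∞,x]), if and only if: G is nondecreasing, G ≡ 0 on (−∞, a], and G(x) = G(b) + (x − b) for all x ≥ b. -/
/-!
If `P` lives on `[a, b]`, its distribution function `F` is monotone, vanishes left of `a` and equals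
`1` from `b` on, and these three facts give the three properties of `G = ∫_{-∞}^x F`.

Conversely, the right derivative of the convex function `G` is monotone, vanishes left of `a` and
equals `1` from `b` on. Its right-continuous regularisation is therefore the distribution function
of a probability measure on `[a, b]`, and since it differs from the right derivative only at the
countably many jumps, the fundamental theorem of calculus recovers `G` as its integral.
-/

open MeasureTheory ProbabilityTheory Set Filter Topology

section IntegralIic

variable {F : ℝ → ℝ} {a b x : ℝ}

theorem integrableOn_Iic_of_monotone (hF : Monotone F) (h0 : ∀ s < a, F s = 0) (x : ℝ) :
    IntegrableOn F (Iic x) := by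
  have hIio : IntegrableOn F (Iio a) :=
    integrableOn_zero.congr_fun (fun s hs => (h0 s hs).symm) measurableSet_Iio
  have hIcc : IntegrableOn F (Icc a x) := (hF.monotoneOn _).integrableOn_isCompact isCompact_Icc
  refine (hIio.union hIcc).mono_set fun s hs => ?_
  rcases lt_or_ge s a with h | h
  exacts [Or.inl h, Or.inr ⟨h, hs⟩]

theorem monotone_integral_Iic (hF : ∀ x, IntegrableOn F (Iic x)) (hF0 : 0 ≤ F) :
    Monotone fun x => ∫ s in Iic x, F s := fun _ y hxy =>
  setIntegral_mono_set (hF y) (Eventually.of_forall fun s => hF0 s)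
    (Eventually.of_forall (Iic_subset_Iic.2 hxy))

theorem integral_Iic_eq_zero_of_le (h0 : ∀ s < a, F s = 0) (hx : x ≤ a) :
    ∫ s in Iic x, F s = 0 := by
  rw [integral_Iic_eq_integral_Iio]
  exact setIntegral_eq_zero_of_forall_eq_zero fun s hs => h0 s (lt_of_lt_of_le hs hx)

theorem integral_Iic_eq_intervalIntegral {c : ℝ} (hF : IntegrableOn F (Iic x)) (hcx : c ≤ x)
    (h0 : ∀ s ≤ c, F s = 0) : ∫ s in Iic x, F s = ∫ s in c..x, F s := by
  have hc : ∫ s in Iic c, F s = 0 := setIntegral_eq_zero_of_forall_eq_zero fun s hs => h0 s hs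
  rw [← intervalIntegral.integral_Iic_sub_Iic (hF.mono_set (Iic_subset_Iic.2 hcx)) hF, hc,
    sub_zero]

theorem integral_Iic_eq_add_of_eq_one (hF : IntegrableOn F (Iic x)) (h1 : ∀ s, b ≤ s → F s = 1)
    (hbx : b ≤ x) : ∫ s in Iic x, F s = (∫ s in Iic b, F s) + (x - b) := by
  rw [← sub_eq_iff_eq_add', intervalIntegral.integral_Iic_sub_Iic
    (hF.mono_set (Iic_subset_Iic.2 hbx)) hF,
    intervalIntegral.integral_congr fun s hs => h1 s (uIcc_of_le hbx ▸ hs).1]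
  simp

end IntegralIic

theorem measure_compl_Icc_eq_zero_iff_cdf (P : Measure ℝ) [IsProbabilityMeasure P] {a b : ℝ} :
    P (Icc a b)ᶜ = 0 ↔ (∀ x < a, cdf P x = 0) ∧ ∀ x, b ≤ x → cdf P x = 1 := by
  constructor
  · intro h
    refine ⟨fun x hx => ?_, fun x hx => ?_⟩
    · rw [cdf_eq_real, measureReal_def, measure_mono_null (fun s hs => ?_) h,
        ENNReal.toReal_zero]
      exact fun hs' => (lt_of_le_of_lt hs hx).not_ge hs'.1
    · rw [cdf_eq_real, measureReal_def, (prob_compl_eq_zero_iff measurableSet_Iic).1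
        (measure_mono_null (fun s hs => ?_) h), ENNReal.toReal_one]
      exact fun hs' => (lt_of_le_of_lt hx (not_le.1 hs)).not_ge hs'.2
  · rintro ⟨h0, h1⟩
    have hIio : P (Iio a) = 0 := by
      have hlim : Function.leftLim (cdf P) a = 0 := leftLim_eq_of_tendsto
        (tendsto_const_nhds.congr' (eventually_nhdsWithin_of_forall fun x hx => (h0 x hx).symm))
      rw [← measure_cdf P, (cdf P).measure_Iio (tendsto_cdf_atBot P), hlim, sub_zero,
        ENNReal.ofReal_zero]
    have hIoi : P (Ioi b) = 0 := by
      rw [← measure_cdf P, (cdf P).measure_Ioi (tendsto_cdf_atTop P), h1 b le_rfl, sub_self,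
        ENNReal.ofReal_zero]
    refine measure_mono_null (fun s hs => ?_) (measure_union_null hIio hIoi)
    simpa [or_iff_not_imp_left] using hs

section RightDeriv

variable {G : ℝ → ℝ} {a b x : ℝ}

theorem ConvexOn.monotone_rightDeriv (hG : ConvexOn ℝ univ G) :
    Monotone fun x => derivWithin G (Ioi x) x := by
  simpa [interior_univ, monotoneOn_univ] using hG.monotoneOn_rightDeriv

theorem ConvexOn.integral_rightDeriv (hG : ConvexOn ℝ univ G) (u v : ℝ) :
    ∫ x in u..v, derivWithin G (Ioi x) x = G v - G u :=
  intervalIntegral.integral_eq_sub_of_hasDeriv_right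
    (hG.continuousOn isOpen_univ |>.mono (subset_univ _))
    (fun x _ => hG.hasDerivWithinAt_rightDeriv_of_mem_interior (by simp))
    hG.monotone_rightDeriv.intervalIntegrable

theorem rightDeriv_eq_zero_of_lt (hG0 : ∀ x ≤ a, G x = 0) (hx : x < a) :
    derivWithin G (Ioi x) x = 0 := by
  have hGx : G =ᶠ[𝓝[>] x] fun _ => 0 :=
    eventually_nhdsWithin_of_eventually_nhds <| (eventually_le_nhds hx).mono hG0
  rw [hGx.derivWithin_eq (hG0 x hx.le)]
  simp

theorem rightDeriv_eq_one_of_le (hGb : ∀ x, b ≤ x → G x = G b + (x - b)) (hx : b ≤ x) :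
    derivWithin G (Ioi x) x = 1 := by
  have hGx : G =ᶠ[𝓝[>] x] fun y => G b + (y - b) :=
    eventually_nhdsWithin_of_forall fun y hy => hGb y (hx.trans (le_of_lt hy))
  rw [hGx.derivWithin_eq (hGb x hx)]
  exact ((hasDerivAt_id x).sub_const b).const_add (G b) |>.hasDerivWithinAt.derivWithin
    (uniqueDiffWithinAt_Ioi x)

end RightDeriv

theorem Monotone.stieltjesFunction_ae_eq {f : ℝ → ℝ} (hf : Monotone f) :
    (hf.stieltjesFunction : ℝ → ℝ) =ᵐ[volume] f := by
  rw [EventuallyEq, ae_iff]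
  exact measure_mono_null
    (fun x hx hcont => hx (ContinuousAt.continuousWithinAt hcont).rightLim_eq)
    (hf.countable_not_continuousAt.measure_zero _)

theorem ConvexOn.exists_stieltjesFunction_eq_integral_Iic {G : ℝ → ℝ} {a b : ℝ}
    (hG : ConvexOn ℝ univ G) (hG0 : ∀ x ≤ a, G x = 0)
    (hGb : ∀ x, b ≤ x → G x = G b + (x - b)) :
    ∃ F : StieltjesFunction ℝ, (∀ x < a, F x = 0) ∧ (∀ x, b ≤ x → F x = 1) ∧
      ∀ x, G x = ∫ s in Iic x, F s := by
  have hrd := hG.monotone_rightDeriv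
  set F := hrd.stieltjesFunction
  have hF0 : ∀ x < a, F x = 0 := fun x hx => by
    obtain ⟨y, hxy, hya⟩ := exists_between hx
    exact le_antisymm ((hrd.rightLim_le hxy).trans (rightDeriv_eq_zero_of_lt hG0 hya).le)
      ((rightDeriv_eq_zero_of_lt hG0 hx).ge.trans (hrd.le_rightLim le_rfl))
  have hF1 : ∀ x, b ≤ x → F x = 1 := fun x hx =>
    le_antisymm ((hrd.rightLim_le (lt_add_one x)).trans
        (rightDeriv_eq_one_of_le hGb (hx.trans (lt_add_one x).le)).le)
      ((rightDeriv_eq_one_of_le hGb hx).ge.trans (hrd.le_rightLim le_rfl))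
  refine ⟨F, hF0, hF1, fun x => ?_⟩
  set c := min a x - 1
  have hca : c < a := by linarith [min_le_left a x]
  have hcx : c ≤ x := by linarith [min_le_right a x]
  calc G x = G x - G c := by rw [hG0 c hca.le, sub_zero]
    _ = ∫ s in c..x, derivWithin G (Ioi s) s := (hG.integral_rightDeriv c x).symm
    _ = ∫ s in c..x, F s := intervalIntegral.integral_congr_ae
        (hrd.stieltjesFunction_ae_eq.mono fun s hs _ => hs.symm)
    _ = ∫ s in Iic x, F s := (integral_Iic_eq_intervalIntegral
        (integrableOn_Iic_of_monotone F.mono hF0 x) hcx fun s hs => hF0 s (hs.trans_lt hca)).symm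

theorem integrated_cdf_characterization_general (a b : ℝ) (G : ℝ → ℝ)
    (hG : ConvexOn ℝ Set.univ G) :
    (∃ P : Measure ℝ, IsProbabilityMeasure P ∧ P (Set.Icc a b)ᶜ = 0 ∧
        ∀ x : ℝ, G x = ∫ s in Set.Iic x, (P (Set.Iic s)).toReal)
    ↔ (Monotone G ∧ (∀ x ≤ a, G x = 0) ∧ ∀ x : ℝ, b ≤ x → G x = G b + (x - b)) := by
  have hcdf (P : Measure ℝ) [IsProbabilityMeasure P] (s : ℝ) :
      (P (Iic s)).toReal = cdf P s := by rw [cdf_eq_real, measureReal_def]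
  constructor
  · rintro ⟨P, hP, hsupp, hGP⟩
    obtain ⟨h0, h1⟩ := (measure_compl_Icc_eq_zero_iff_cdf P).1 hsupp
    have hint := integrableOn_Iic_of_monotone (cdf P).mono h0
    obtain rfl : G = fun x => ∫ s in Iic x, cdf P s := funext fun x => by simp_rw [hGP, hcdf]
    exact ⟨monotone_integral_Iic hint (cdf_nonneg P), fun x => integral_Iic_eq_zero_of_le h0,
      fun x => integral_Iic_eq_add_of_eq_one (hint x) h1⟩
  · rintro ⟨-, hG0, hGb⟩
    obtain ⟨F, hF0, hF1, hGF⟩ := hG.exists_stieltjesFunction_eq_integral_Iic hG0 hGb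
    have hbot : Tendsto F atBot (𝓝 0) := tendsto_atBot_of_eventually_const fun x hx =>
      hF0 x (hx.trans_lt (sub_one_lt a))
    have htop : Tendsto F atTop (𝓝 1) := tendsto_atTop_of_eventually_const fun x => hF1 x
    have hP := F.isProbabilityMeasure hbot htop
    have hFcdf := cdf_measure_stieltjesFunction F hbot htop
    refine ⟨F.measure, hP, (measure_compl_Icc_eq_zero_iff_cdf _).2 ?_, fun x => ?_⟩
    · rw [hFcdf]
      exact ⟨hF0, hF1⟩
    simp_rw [hcdf, hFcdf]
    exact hGF x

/-- Lemma A.5, conditions for `G`: let `a < b` and let `G : ℝ → ℝ` be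
convex. There exists a probability measure `P` on `ℝ` supported in `[a,b]` whose
integrated distribution function `x ↦ ∫_{-∞}^x P((-∞,s]) ds` equals `G` if and only if
`G` is nondecreasing, `G ≡ 0` on `(-∞, a]`, and `G(x) = G(b) + (x - b)` for `x ≥ b`. -/
theorem integrated_cdf_characterization (a b : ℝ) (hab : a < b) (G : ℝ → ℝ)
    (hG : ConvexOn ℝ Set.univ G) :
    (∃ P : Measure ℝ, IsProbabilityMeasure P ∧ P (Set.Icc a b)ᶜ = 0 ∧
        ∀ x : ℝ, G x = ∫ s in Set.Iic x, (P (Set.Iic s)).toReal)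
    ↔ (Monotone G ∧ (∀ x ≤ a, G x = 0) ∧ ∀ x : ℝ, b ≤ x → G x = G b + (x - b)) :=
  integrated_cdf_characterization_general a b G hG
end

section
/- Suppose the discrete fragmentation coefficients satisfy k_{i,j} ≥ 0, k_{i,j} = 0 for i ≥ j, k_{i,j} = k_{j−i,j}, ∑_{i=1}^{j−1} k_{i,j} = 1, together with the strengthened assumption |∑_{i'≤i} (k_{i',j+1} − k_{i',j})| ≤ K/j and k_{i,j} ≤ K/j for all i, j, and suppose ε n₀(ε) → x₀ > 0. Define F^ε(x,y) = ∫₀^x k^ε(z,y) dz and G^ε(x,y) = ∫₀^x F^ε(z,y) dz for the step kernel k^ε. Then the families (F^ε) and (G^ε) are uniformly bounded on compact subsets of [0,∞) × [x₀, ∞), and there is a sequence ε_n → 0 along which F^{ε_n} and G^{ε_n} converge uniformly on every compact subset of [0,∞) × [x₀, ∞). -/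
/-!
For `y ≥ x₀` the step kernel is bounded by `2K/x₀`: `k_{i,j} ≤ K/j` and `j ε > y/2` for
`j = ⌊y/ε⌋ ≥ 1`, while `j = 0` is harmless because `k_{i,0} ≤ K/0 = 0`. So `F^ε` and `G^ε` are
Lipschitz in `x`, uniformly in `ε` on compacts. In `y` they are Lipschitz up to an `O(ε)` defect:
at grid points `F^ε(mε, y) = ∑_{i<m} k_{i,j}` with `j = ⌊y/ε⌋`, and the strengthened assumption
telescopes to `|∑_{i<m} (k_{i,j} - k_{i,j'})| ≤ (j - j') K/j'`. An Arzelà–Ascoli argument that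
tolerates a vanishing defect in the equicontinuity (a diagonal subsequence converging on a
countable dense set, hence uniformly on compacts) produces the limits.
-/

open Filter MeasureTheory Topology Set Bornology TopologicalSpace

section AsymptoticEquicontinuity

variable {X E : Type*} [PseudoMetricSpace X] [PseudoMetricSpace E]

def AsymptoticallyEquicontinuousOn (H : ℕ → X → E) (C S : Set X) : Prop :=
  ∀ r > 0, ∃ ρ > 0, ∀ᶠ m in atTop, ∀ p ∈ C, ∀ q ∈ S, dist p q < ρ → dist (H m p) (H m q) < r

lemma AsymptoticallyEquicontinuousOn.comp_strictMono {H : ℕ → X → E} {C S : Set X}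
    (hH : AsymptoticallyEquicontinuousOn H C S) {φ : ℕ → ℕ} (hφ : StrictMono φ) {t : Set X}
    (ht : t ⊆ S) : AsymptoticallyEquicontinuousOn (fun m => H (φ m)) C t := fun r hr => by
  obtain ⟨ρ, hρ, hev⟩ := hH r hr
  exact ⟨ρ, hρ, (hφ.tendsto_atTop.eventually hev).mono fun m hm p hp q hq => hm p hp q (ht hq)⟩

lemma asymptoticallyEquicontinuousOn_of_dist_le {H : ℕ → X → E} {C S : Set X} {A : ℝ}
    (hA : 0 ≤ A) {δ : ℕ → ℝ} (hδ : Tendsto δ atTop (𝓝 0))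
    (hmod : ∀ m, ∀ p ∈ C, ∀ q ∈ S, dist p q < 1 → dist (H m p) (H m q) ≤ A * (dist p q + δ m)) :
    AsymptoticallyEquicontinuousOn H C S := by
  intro r hr
  set η := r / (2 * (A + 1)) with hη
  have hη0 : 0 < η := by positivity
  have hAη : A * (2 * η) < r := by
    calc A * (2 * η) = r * (A / (A + 1)) := by rw [hη]; field_simp
      _ < r * 1 := by gcongr; rw [div_lt_one (by positivity)]; linarith
      _ = r := mul_one r
  refine ⟨min 1 η, by positivity, ?_⟩
  filter_upwards [hδ.abs.eventually (gt_mem_nhds (by simpa using hη0))] with m hm p hp q hq hpq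
  calc dist (H m p) (H m q) ≤ A * (dist p q + δ m) :=
        hmod m p hp q hq (hpq.trans_le (min_le_left _ _))
    _ ≤ A * (2 * η) := by
        gcongr
        linarith [le_abs_self (δ m), hpq.trans_le (min_le_right _ _)]
    _ < r := hAη

lemma uniformCauchySeqOn_of_cauchySeq_of_subset_closure {H : ℕ → X → E} {C t : Set X}
    (hC : IsCompact C) (hCt : C ⊆ closure t) (hcauchy : ∀ q ∈ t, CauchySeq fun m => H m q)
    (hequi : AsymptoticallyEquicontinuousOn H C t) : UniformCauchySeqOn H atTop C := by
  intro U hU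
  obtain ⟨r, hr, hrU⟩ := Metric.mem_uniformity_dist.1 hU
  obtain ⟨ρ, hρ, hev⟩ := hequi (r / 3) (by positivity)
  have hcover : C ⊆ ⋃ q ∈ t, Metric.ball q ρ := fun p hp => by
    obtain ⟨q, hq, hpq⟩ := Metric.mem_closure_iff.1 (hCt hp) ρ hρ
    exact mem_iUnion₂.2 ⟨q, hq, hpq⟩
  obtain ⟨t', ht't, ht'fin, hCt'⟩ :=
    hC.elim_finite_subcover_image (fun _ _ => Metric.isOpen_ball) hcover
  have hcauchy' : ∀ q ∈ t', ∀ᶠ ab : ℕ × ℕ in atTop ×ˢ atTop, dist (H ab.1 q) (H ab.2 q) < r / 3 :=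
    fun q hq => by
      have h := (cauchySeq_iff_tendsto.1 (hcauchy q (ht't hq))).eventually
        (Metric.dist_mem_uniformity (by positivity : (0 : ℝ) < r / 3))
      rwa [← prod_atTop_atTop_eq] at h
  filter_upwards [tendsto_fst.eventually hev, tendsto_snd.eventually hev,
    (eventually_all_finite ht'fin).2 hcauchy'] with ab ha hb hab p hp
  obtain ⟨q, hq, hpq⟩ := mem_iUnion₂.1 (hCt' hp)
  refine hrU ?_
  calc dist (H ab.1 p) (H ab.2 p)
      ≤ dist (H ab.1 p) (H ab.1 q) + dist (H ab.1 q) (H ab.2 q) + dist (H ab.2 q) (H ab.2 p) :=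
        dist_triangle4 _ _ _ _
    _ < r / 3 + r / 3 + r / 3 := by
        gcongr
        · exact ha p hp q (ht't hq) hpq
        · exact hab q hq
        · rw [dist_comm]; exact hb p hp q (ht't hq) hpq
    _ = r := by ring

lemma exists_strictMono_forall_cauchySeq {ι : Type*} [Countable ι] [ProperSpace E]
    (u : ℕ → ι → E) (hu : ∀ i, IsBounded (range fun m => u m i)) :
    ∃ φ : ℕ → ℕ, StrictMono φ ∧ ∀ i, CauchySeq fun m => u (φ m) i := by
  have hK : IsCompact (univ.pi fun i => closure (range fun m => u m i)) :=
    isCompact_univ_pi fun i => (hu i).isCompact_closure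
  obtain ⟨_, -, φ, hφ, hlim⟩ :=
    hK.tendsto_subseq fun m => mem_univ_pi.2 fun i => subset_closure (mem_range_self m)
  exact ⟨φ, hφ, fun i => (tendsto_pi_nhds.1 hlim i).cauchySeq⟩

theorem exists_subseq_tendstoUniformlyOn_of_asymptoticallyEquicontinuousOn
    [SeparableSpace X] [ProperSpace E] [Nonempty E] {H : ℕ → X → E} {S : Set X}
    (hbdd : ∀ p ∈ S, IsBounded (range fun m => H m p))
    (hequi : ∀ C ⊆ S, IsCompact C → AsymptoticallyEquicontinuousOn H C S) :
    ∃ φ : ℕ → ℕ, StrictMono φ ∧ ∃ H' : X → E,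
      ∀ C ⊆ S, IsCompact C → TendstoUniformlyOn (fun m => H (φ m)) H' atTop C := by
  obtain ⟨t, htS, htc, hSt⟩ := (IsSeparable.of_separableSpace S).exists_countable_dense_subset
  have := htc.to_subtype
  obtain ⟨φ, hφ, hcauchy⟩ := exists_strictMono_forall_cauchySeq (fun m (q : t) => H m q)
    fun q => hbdd q (htS q.2)
  have hunif : ∀ C ⊆ S, IsCompact C → UniformCauchySeqOn (fun m => H (φ m)) atTop C :=
    fun C hCS hC => uniformCauchySeqOn_of_cauchySeq_of_subset_closure hC (hCS.trans hSt)
      (fun q hq => hcauchy ⟨q, hq⟩) ((hequi C hCS hC).comp_strictMono hφ htS)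
  refine ⟨φ, hφ, fun p => limUnder atTop fun m => H (φ m) p, fun C hCS hC =>
    (hunif C hCS hC).tendstoUniformlyOn_of_tendsto fun p hp => ?_⟩
  exact ((hunif {p} (singleton_subset_iff.2 (hCS hp)) isCompact_singleton).cauchySeq
    (mem_singleton p)).tendsto_limUnder

end AsymptoticEquicontinuity

lemma intervalIntegrable_comp_natFloor_div (a : ℕ → ℝ) (ε u v : ℝ) :
    IntervalIntegrable (fun z => a ⌊z / ε⌋₊) volume u v := by
  set N := ⌊max |u| |v| / |ε|⌋₊
  have hmeas : Measurable fun z : ℝ => a ⌊z / ε⌋₊ :=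
    measurable_from_top.comp (Nat.measurable_floor.comp (measurable_id.div_const ε))
  refine (intervalIntegrable_const (c := ∑ i ∈ Finset.range (N + 1), |a i|)).mono_fun
    hmeas.aestronglyMeasurable ((ae_restrict_mem measurableSet_uIoc).mono fun z hz => ?_)
  have hz : |z| ≤ max |u| |v| := by
    rcases mem_uIcc.1 (uIoc_subset_uIcc hz) with h | h
    · exact abs_le_max_abs_abs h.1 h.2
    · exact (abs_le_max_abs_abs h.1 h.2).trans_eq (max_comm _ _)
  have hzN : ⌊z / ε⌋₊ ∈ Finset.range (N + 1) := by
    refine Finset.mem_range_succ_iff.2 (Nat.floor_le_floor ?_)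
    calc z / ε ≤ |z / ε| := le_abs_self _
      _ = |z| / |ε| := abs_div z ε
      _ ≤ max |u| |v| / |ε| := div_le_div_of_nonneg_right hz (abs_nonneg ε)
  simp only [Real.norm_eq_abs, abs_of_nonneg (Finset.sum_nonneg fun i _ => abs_nonneg (a i))]
  exact Finset.single_le_sum (f := fun i => |a i|) (fun i _ => abs_nonneg (a i)) hzN

lemma integral_comp_natFloor_div_cell (a : ℕ → ℝ) {ε : ℝ} (hε : 0 < ε) (i : ℕ) :
    ∫ z in i * ε..(i + 1) * ε, a ⌊z / ε⌋₊ = ε * a i := by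
  have hle : (i : ℝ) * ε ≤ (i + 1) * ε := by gcongr; linarith
  have hconst : ∀ z ∈ Ioo ((i : ℝ) * ε) ((i + 1) * ε), a ⌊z / ε⌋₊ = a i := fun z hz => by
    congr 1
    rw [Nat.floor_eq_iff (div_nonneg ((by positivity : (0 : ℝ) ≤ i * ε).trans hz.1.le) hε.le),
      le_div_iff₀ hε, div_lt_iff₀ hε]
    exact ⟨hz.1.le, hz.2⟩
  rw [intervalIntegral.integral_of_le hle, integral_Ioc_eq_integral_Ioo,
    setIntegral_congr_fun measurableSet_Ioo hconst, setIntegral_const,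
    Real.volume_real_Ioo_of_le hle, smul_eq_mul]
  ring

lemma integral_comp_natFloor_div_natCast_mul (a : ℕ → ℝ) {ε : ℝ} (hε : 0 < ε) (m : ℕ) :
    ∫ z in (0 : ℝ)..m * ε, a ⌊z / ε⌋₊ = ε * ∑ i ∈ Finset.range m, a i := by
  induction m with
  | zero => simp
  | succ m ih =>
    rw [Finset.sum_range_succ, mul_add, ← ih, ← integral_comp_natFloor_div_cell a hε m,
      Nat.cast_succ, intervalIntegral.integral_add_adjacent_intervals
        (intervalIntegrable_comp_natFloor_div a ε _ _)
        (intervalIntegrable_comp_natFloor_div a ε _ _)]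

lemma abs_sub_natFloor_div_mul_le {x ε : ℝ} (hx : 0 ≤ x) (hε : 0 < ε) :
    |x - ⌊x / ε⌋₊ * ε| ≤ ε := by
  have hle : (⌊x / ε⌋₊ : ℝ) * ε ≤ x := (le_div_iff₀ hε).1 (Nat.floor_le (div_nonneg hx hε.le))
  have hlt : x < (⌊x / ε⌋₊ + 1) * ε := (div_lt_iff₀ hε).1 (Nat.lt_floor_add_one _)
  rw [abs_of_nonneg (sub_nonneg.2 hle)]
  linarith

lemma abs_integral_sub_integral_le {f : ℝ → ℝ} {a x x' C : ℝ}
    (hx : IntervalIntegrable f volume a x) (hx' : IntervalIntegrable f volume a x')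
    (hC : ∀ z ∈ uIoc x' x, |f z| ≤ C) :
    |(∫ z in a..x, f z) - ∫ z in a..x', f z| ≤ C * |x - x'| := by
  rw [intervalIntegral.integral_interval_sub_left hx hx']
  simpa only [Real.norm_eq_abs] using
    intervalIntegral.norm_integral_le_of_norm_le_const (f := f) hC

lemma abs_sub_le_mul_of_abs_succ_sub_le {g : ℕ → ℝ} {c : ℝ} {a b : ℕ} (hab : a ≤ b)
    (hg : ∀ l ∈ Finset.Ico a b, |g (l + 1) - g l| ≤ c) : |g b - g a| ≤ (b - a) * c :=
  calc |g b - g a| = dist (g a) (g b) := by rw [Real.dist_eq, abs_sub_comm]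
    _ ≤ ∑ l ∈ Finset.Ico a b, dist (g l) (g (l + 1)) := dist_le_Ico_sum_dist g hab
    _ ≤ ∑ _l ∈ Finset.Ico a b, c :=
        Finset.sum_le_sum fun l hl => by rw [Real.dist_eq, abs_sub_comm]; exact hg l hl
    _ = (b - a) * c := by simp [Nat.cast_sub hab]

lemma div_natFloor_div_le {K x₀ y ε : ℝ} (hK : 0 ≤ K) (hx₀ : 0 < x₀) (hy : x₀ ≤ y)
    (hε : 0 < ε) : K / ⌊y / ε⌋₊ ≤ 2 * K / x₀ * ε := by
  rcases Nat.eq_zero_or_pos ⌊y / ε⌋₊ with hj | hj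
  · rw [hj, Nat.cast_zero, div_zero]
    positivity
  have hj' : (1 : ℝ) ≤ ⌊y / ε⌋₊ := by exact_mod_cast hj
  have hy2 : x₀ < 2 * ⌊y / ε⌋₊ * ε := by
    have := (div_lt_iff₀ hε).1 (Nat.lt_floor_add_one (y / ε))
    nlinarith
  rw [div_le_iff₀ (by positivity), div_mul_eq_mul_div, div_mul_eq_mul_div, le_div_iff₀ hx₀]
  nlinarith

namespace Fragmentation

/-- The paper's `k^ε(z, y)`; `repartition` and `repartitionPrimitive` are its `F^ε` and `G^ε`. -/
noncomputable def stepKernel (k : ℕ → ℕ → ℝ) (ε z y : ℝ) : ℝ := k ⌊z / ε⌋₊ ⌊y / ε⌋₊ / ε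

noncomputable def repartition (k : ℕ → ℕ → ℝ) (ε x y : ℝ) : ℝ :=
  ∫ z in (0 : ℝ)..x, stepKernel k ε z y

noncomputable def repartitionPrimitive (k : ℕ → ℕ → ℝ) (ε x y : ℝ) : ℝ :=
  ∫ z in (0 : ℝ)..x, repartition k ε z y

noncomputable def repartitionPair (k : ℕ → ℕ → ℝ) (ε : ℝ) (p : ℝ × ℝ) : ℝ × ℝ :=
  (repartition k ε p.1 p.2, repartitionPrimitive k ε p.1 p.2)

structure KernelBounds (k : ℕ → ℕ → ℝ) (K : ℝ) : Prop where
  nonneg : ∀ i j, 0 ≤ k i j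
  le_div : ∀ i j : ℕ, k i j ≤ K / j
  abs_sum_succ_sub_le : ∀ i j : ℕ, |∑ i' ∈ Finset.range (i + 1), (k i' (j + 1) - k i' j)| ≤ K / j

variable {k : ℕ → ℕ → ℝ} {K x₀ ε : ℝ}

lemma KernelBounds.const_nonneg (hk : KernelBounds k K) : 0 ≤ K := by
  simpa using (hk.nonneg 0 1).trans (hk.le_div 0 1)

lemma intervalIntegrable_stepKernel (k : ℕ → ℕ → ℝ) (ε y u v : ℝ) :
    IntervalIntegrable (fun z => stepKernel k ε z y) volume u v :=
  intervalIntegrable_comp_natFloor_div (fun i => k i ⌊y / ε⌋₊ / ε) ε u v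

lemma continuous_repartition (k : ℕ → ℕ → ℝ) (ε y : ℝ) :
    Continuous fun x => repartition k ε x y :=
  intervalIntegral.continuous_primitive (intervalIntegrable_stepKernel k ε y) 0

lemma repartition_natCast_mul (hε : 0 < ε) (m : ℕ) (y : ℝ) :
    repartition k ε (m * ε) y = ∑ i ∈ Finset.range m, k i ⌊y / ε⌋₊ := by
  simp only [repartition, stepKernel]
  rw [integral_comp_natFloor_div_natCast_mul (fun i => k i ⌊y / ε⌋₊ / ε) hε m, Finset.mul_sum]
  exact Finset.sum_congr rfl fun i _ => mul_div_cancel₀ _ hε.ne'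

lemma abs_stepKernel_le (hx₀ : 0 < x₀) (hk : KernelBounds k K)
    (hε : 0 < ε) {y : ℝ} (hy : x₀ ≤ y) (z : ℝ) :
    |stepKernel k ε z y| ≤ 2 * K / x₀ := by
  rw [stepKernel, abs_of_nonneg (div_nonneg (hk.nonneg _ _) hε.le), div_le_iff₀ hε]
  exact (hk.le_div _ _).trans (div_natFloor_div_le hk.const_nonneg hx₀ hy hε)

lemma abs_repartition_sub_le (hx₀ : 0 < x₀) (hk : KernelBounds k K)
    (hε : 0 < ε) {y : ℝ} (hy : x₀ ≤ y) (x x' : ℝ) :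
    |repartition k ε x y - repartition k ε x' y| ≤ 2 * K / x₀ * |x - x'| :=
  abs_integral_sub_integral_le (intervalIntegrable_stepKernel k ε y _ _)
    (intervalIntegrable_stepKernel k ε y _ _)
    fun z _ => abs_stepKernel_le hx₀ hk hε hy z

lemma abs_repartition_le (hx₀ : 0 < x₀) (hk : KernelBounds k K)
    (hε : 0 < ε) {y : ℝ} (hy : x₀ ≤ y) (x : ℝ) :
    |repartition k ε x y| ≤ 2 * K / x₀ * |x| := by
  simpa [repartition] using abs_repartition_sub_le hx₀ hk hε hy x 0

lemma abs_sum_sub_sum_le (hk : KernelBounds k K) (m : ℕ) {j j' : ℕ} (hj' : 1 ≤ j') (hjj : j' ≤ j) :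
    |∑ i ∈ Finset.range m, k i j - ∑ i ∈ Finset.range m, k i j'| ≤ (j - j') * (K / j') := by
  refine abs_sub_le_mul_of_abs_succ_sub_le (g := fun l => ∑ i ∈ Finset.range m, k i l) hjj
    fun l hl => ?_
  have hK := hk.const_nonneg
  have hl : (j' : ℝ) ≤ l := by exact_mod_cast (Finset.mem_Ico.1 hl).1
  have hj'0 : (0 : ℝ) < j' := by exact_mod_cast hj'
  calc |∑ i ∈ Finset.range m, k i (l + 1) - ∑ i ∈ Finset.range m, k i l| ≤ K / l := by
        cases m with
        | zero => simpa using div_nonneg hk.const_nonneg (Nat.cast_nonneg l)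
        | succ n => simpa [Finset.sum_sub_distrib] using hk.abs_sum_succ_sub_le n l
    _ ≤ K / j' := by gcongr

lemma abs_repartition_sub_snd_le (hx₀ : 0 < x₀) (hk : KernelBounds k K)
    (hε : 0 < ε) (hεx₀ : ε ≤ x₀) {x y y' : ℝ} (hx : 0 ≤ x) (hy : x₀ ≤ y) (hy' : x₀ ≤ y') :
    |repartition k ε x y - repartition k ε x y'| ≤ 2 * K / x₀ * (|y - y'| + 3 * ε) := by
  wlog hyy : y' ≤ y generalizing y y'
  · rw [abs_sub_comm, abs_sub_comm y]
    exact this hy' hy (le_of_not_ge hyy)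
  have hK := hk.const_nonneg
  set L := 2 * K / x₀
  set m := ⌊x / ε⌋₊
  have hgrid : ∀ {Y}, x₀ ≤ Y →
      |repartition k ε x Y - ∑ i ∈ Finset.range m, k i ⌊Y / ε⌋₊| ≤ L * ε := fun hY => by
    rw [← repartition_natCast_mul hε]
    exact (abs_repartition_sub_le hx₀ hk hε hY _ _).trans
      (by gcongr; exact abs_sub_natFloor_div_mul_le hx hε)
  set j := ⌊y / ε⌋₊
  set j' := ⌊y' / ε⌋₊
  have hj' : 1 ≤ j' := Nat.le_floor (by rw [Nat.cast_one, one_le_div hε]; linarith)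
  have hjj : j' ≤ j := Nat.floor_le_floor (by gcongr)
  have hjj' : (j : ℝ) - j' ≤ (y - y') / ε + 1 := by
    have := Nat.floor_le (div_nonneg (hx₀.le.trans hy) hε.le)
    have := Nat.lt_floor_add_one (y' / ε)
    rw [sub_div]
    linarith
  have hsum : |∑ i ∈ Finset.range m, k i j - ∑ i ∈ Finset.range m, k i j'| ≤ L * (y - y' + ε) :=
    calc _ ≤ (j - j') * (K / j') := abs_sum_sub_sum_le hk m hj' hjj
      _ ≤ ((y - y') / ε + 1) * (L * ε) := by
          gcongr
          exact div_natFloor_div_le hk.const_nonneg hx₀ hy' hε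
      _ = L * (y - y' + ε) := by field_simp
  calc |repartition k ε x y - repartition k ε x y'|
      ≤ |repartition k ε x y - ∑ i ∈ Finset.range m, k i j|
        + |∑ i ∈ Finset.range m, k i j - ∑ i ∈ Finset.range m, k i j'|
        + |∑ i ∈ Finset.range m, k i j' - repartition k ε x y'| := by
          simpa only [Real.dist_eq] using dist_triangle4 (repartition k ε x y)
            (∑ i ∈ Finset.range m, k i j) (∑ i ∈ Finset.range m, k i j') (repartition k ε x y')
    _ ≤ L * ε + L * (y - y' + ε) + L * ε := by
        gcongr
        · exact hgrid hy
        · rw [abs_sub_comm]; exact hgrid hy'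
    _ = L * (|y - y'| + 3 * ε) := by rw [abs_of_nonneg (sub_nonneg.2 hyy)]; ring

lemma abs_repartitionPrimitive_sub_le (hx₀ : 0 < x₀) (hk : KernelBounds k K)
    (hε : 0 < ε) {y : ℝ}
    (hy : x₀ ≤ y) {x x' R : ℝ} (hx : |x| ≤ R) (hx' : |x'| ≤ R) :
    |repartitionPrimitive k ε x y - repartitionPrimitive k ε x' y| ≤ 2 * K / x₀ * R * |x - x'| :=
  abs_integral_sub_integral_le ((continuous_repartition k ε y).intervalIntegrable _ _)
    ((continuous_repartition k ε y).intervalIntegrable _ _) fun z hz => by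
      have hK := hk.const_nonneg
      have hzR : |z| ≤ R := abs_le.2 <| uIcc_subset_Icc (abs_le.1 hx') (abs_le.1 hx)
        (uIoc_subset_uIcc hz)
      exact (abs_repartition_le hx₀ hk hε hy z).trans (by gcongr)

lemma abs_repartitionPrimitive_le (hx₀ : 0 < x₀) (hk : KernelBounds k K)
    (hε : 0 < ε) {y : ℝ}
    (hy : x₀ ≤ y) (x : ℝ) : |repartitionPrimitive k ε x y| ≤ 2 * K / x₀ * |x| * |x| := by
  simpa [repartitionPrimitive] using
    abs_repartitionPrimitive_sub_le hx₀ hk hε hy le_rfl (by simp : |(0 : ℝ)| ≤ |x|)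

lemma abs_repartitionPrimitive_sub_snd_le (hx₀ : 0 < x₀) (hk : KernelBounds k K)
    (hε : 0 < ε) (hεx₀ : ε ≤ x₀) {x y y' : ℝ} (hx : 0 ≤ x) (hy : x₀ ≤ y) (hy' : x₀ ≤ y') :
    |repartitionPrimitive k ε x y - repartitionPrimitive k ε x y'| ≤
      2 * K / x₀ * (|y - y'| + 3 * ε) * x := by
  rw [repartitionPrimitive, repartitionPrimitive, ← intervalIntegral.integral_sub
    ((continuous_repartition k ε y).intervalIntegrable _ _)
    ((continuous_repartition k ε y').intervalIntegrable _ _)]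
  refine (intervalIntegral.norm_integral_le_of_norm_le_const
    (f := fun z => repartition k ε z y - repartition k ε z y') fun z hz => ?_).trans_eq
    (by rw [sub_zero, abs_of_nonneg hx])
  rw [uIoc_of_le hx] at hz
  exact abs_repartition_sub_snd_le hx₀ hk hε hεx₀ hz.1.le hy hy'

lemma dist_repartitionPair_le (hx₀ : 0 < x₀) (hk : KernelBounds k K)
    (hε : 0 < ε) (hεx₀ : ε ≤ x₀) {p q : ℝ × ℝ} (hp : p ∈ Ici 0 ×ˢ Ici x₀)
    (hq : q ∈ Ici 0 ×ˢ Ici x₀) {R : ℝ} (hpR : |p.1| ≤ R) (hpq : dist p q < 1) :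
    dist (repartitionPair k ε p) (repartitionPair k ε q) ≤
      3 * (2 * K / x₀) * (R + 1) * (dist p q + ε) := by
  have hK := hk.const_nonneg
  set L := 2 * K / x₀
  have hL : 0 ≤ L := by positivity
  have h₁ : |p.1 - q.1| ≤ dist p q := by rw [← Real.dist_eq, Prod.dist_eq]; exact le_max_left _ _
  have h₂ : |p.2 - q.2| ≤ dist p q := by
    rw [← Real.dist_eq, Prod.dist_eq]; exact le_max_right _ _
  have hqR : |q.1| ≤ R + 1 := by
    have := abs_sub_abs_le_abs_sub q.1 p.1
    rw [abs_sub_comm] at this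
    linarith
  have hq₁ : q.1 ≤ R + 1 := (le_abs_self _).trans hqR
  have hq₀ : 0 ≤ q.1 := hq.1
  have hR : 0 ≤ R := (abs_nonneg _).trans hpR
  have hd : 0 ≤ dist p q := dist_nonneg
  rw [Prod.dist_eq, Real.dist_eq, Real.dist_eq]
  refine max_le ?_ ?_
  · calc |repartition k ε p.1 p.2 - repartition k ε q.1 q.2|
        ≤ |repartition k ε p.1 p.2 - repartition k ε q.1 p.2|
          + |repartition k ε q.1 p.2 - repartition k ε q.1 q.2| := abs_sub_le _ _ _
      _ ≤ L * |p.1 - q.1| + L * (|p.2 - q.2| + 3 * ε) := add_le_add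
          (abs_repartition_sub_le hx₀ hk hε hp.2 _ _)
          (abs_repartition_sub_snd_le hx₀ hk hε hεx₀ hq.1 hp.2 hq.2)
      _ ≤ L * dist p q + L * (dist p q + 3 * ε) := by gcongr
      _ ≤ 3 * L * (R + 1) * (dist p q + ε) := by
          nlinarith [mul_nonneg (mul_nonneg hL hR) (add_nonneg hd hε.le), mul_nonneg hL hd]
  · calc |repartitionPrimitive k ε p.1 p.2 - repartitionPrimitive k ε q.1 q.2|
        ≤ |repartitionPrimitive k ε p.1 p.2 - repartitionPrimitive k ε q.1 p.2|
          + |repartitionPrimitive k ε q.1 p.2 - repartitionPrimitive k ε q.1 q.2| :=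
          abs_sub_le _ _ _
      _ ≤ L * (R + 1) * |p.1 - q.1| + L * (|p.2 - q.2| + 3 * ε) * q.1 := add_le_add
          (abs_repartitionPrimitive_sub_le hx₀ hk hε hp.2 (by linarith) hqR)
          (abs_repartitionPrimitive_sub_snd_le hx₀ hk hε hεx₀ hq.1 hp.2
            hq.2)
      _ ≤ L * (R + 1) * dist p q + L * (dist p q + 3 * ε) * (R + 1) := by
          gcongr
      _ ≤ 3 * L * (R + 1) * (dist p q + ε) := by
          nlinarith [mul_nonneg (mul_nonneg hL (by linarith : (0 : ℝ) ≤ R + 1)) hd]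

lemma isBounded_range_repartitionPair (hx₀ : 0 < x₀) (hk : KernelBounds k K)
    {ε : ℕ → ℝ}
    (hε : ∀ m, 0 < ε m) {p : ℝ × ℝ} (hp : x₀ ≤ p.2) :
    IsBounded (range fun m => repartitionPair k (ε m) p) := by
  have hK := hk.const_nonneg
  have hL : 0 ≤ 2 * K / x₀ * |p.1| := by positivity
  refine isBounded_iff_forall_norm_le.2 ⟨2 * K / x₀ * |p.1| * (|p.1| + 1), forall_mem_range.2
    fun m => norm_prod_le_iff.2 ⟨?_, ?_⟩⟩
  · exact (abs_repartition_le hx₀ hk (hε m) hp p.1).trans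
      (by nlinarith [mul_nonneg hL (abs_nonneg p.1)])
  · exact (abs_repartitionPrimitive_le hx₀ hk (hε m) hp p.1).trans
      (by nlinarith [mul_nonneg hL (abs_nonneg p.1)])

lemma asymptoticallyEquicontinuousOn_repartitionPair (hx₀ : 0 < x₀) (hk : KernelBounds k K)
    {ε : ℕ → ℝ} (hε : ∀ m, 0 < ε m) (hεx₀ : ∀ m, ε m ≤ x₀) (hεlim : Tendsto ε atTop (𝓝 0))
    {C : Set (ℝ × ℝ)} (hC : IsCompact C) (hCS : C ⊆ Ici 0 ×ˢ Ici x₀) :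
    AsymptoticallyEquicontinuousOn (fun m => repartitionPair k (ε m)) C (Ici 0 ×ˢ Ici x₀) := by
  have hK := hk.const_nonneg
  obtain ⟨R, hR, hCR⟩ := hC.isBounded.subset_closedBall_lt 0 0
  refine asymptoticallyEquicontinuousOn_of_dist_le (by positivity) hεlim
    fun m p hp q hq hpq => dist_repartitionPair_le hx₀ hk (hε m)
      (hεx₀ m) (hCS hp) hq ((norm_fst_le p).trans (mem_closedBall_zero_iff.1 (hCR hp))) hpq

end Fragmentation

open Fragmentation in
theorem repartition_function_compactness_general (K x₀ : ℝ) (hx₀ : 0 < x₀)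
    (k : ℕ → ℕ → ℝ)
    (hk0 : ∀ i j, 0 ≤ k i j)
    (hkstrong1 : ∀ i j : ℕ,
      |∑ i' ∈ Finset.range (i + 1), (k i' (j + 1) - k i' j)| ≤ K / j)
    (hkstrong2 : ∀ i j : ℕ, k i j ≤ K / j) :
    (∀ R : ℝ, 0 < R → ∃ B : ℝ, ∀ ε : ℝ, 0 < ε →
      ∀ x ∈ Set.Icc (0:ℝ) R, ∀ y ∈ Set.Icc x₀ R,
        |∫ z in (0:ℝ)..x, k ⌊z / ε⌋₊ ⌊y / ε⌋₊ / ε| ≤ B ∧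
        |∫ z in (0:ℝ)..x, ∫ w in (0:ℝ)..z, k ⌊w / ε⌋₊ ⌊y / ε⌋₊ / ε| ≤ B) ∧
    ∃ (εseq : ℕ → ℝ) (F G : ℝ → ℝ → ℝ),
      (∀ n, 0 < εseq n) ∧ Tendsto εseq atTop (𝓝 0) ∧
      ∀ R : ℝ, 0 < R →
        TendstoUniformlyOn
          (fun n p => ∫ z in (0:ℝ)..p.1, k ⌊z / εseq n⌋₊ ⌊p.2 / εseq n⌋₊ / εseq n)
          (fun p : ℝ × ℝ => F p.1 p.2) atTop (Set.Icc 0 R ×ˢ Set.Icc x₀ R) ∧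
        TendstoUniformlyOn
          (fun n p => ∫ z in (0:ℝ)..p.1,
            ∫ w in (0:ℝ)..z, k ⌊w / εseq n⌋₊ ⌊p.2 / εseq n⌋₊ / εseq n)
          (fun p : ℝ × ℝ => G p.1 p.2) atTop (Set.Icc 0 R ×ˢ Set.Icc x₀ R) := by
  have hk : KernelBounds k K := ⟨hk0, hkstrong2, hkstrong1⟩
  refine ⟨fun R hR => ⟨2 * K / x₀ * R * (R + 1), fun ε hε x hx y hy => ?_⟩, ?_⟩
  · have hxR : |x| ≤ R := abs_le.2 ⟨by linarith [hx.1], hx.2⟩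
    have hK := hk.const_nonneg
    refine ⟨(abs_repartition_le hx₀ hk hε hy.1 x).trans ?_,
      (abs_repartitionPrimitive_le hx₀ hk hε hy.1 x).trans (by gcongr; linarith)⟩
    calc 2 * K / x₀ * |x| ≤ 2 * K / x₀ * R := by gcongr
      _ ≤ 2 * K / x₀ * R * (R + 1) := le_mul_of_one_le_right (by positivity) (by linarith)
  set ε : ℕ → ℝ := fun m => x₀ / (m + 1)
  have hε : ∀ m, 0 < ε m := fun m => by positivity
  have hεx₀ : ∀ m, ε m ≤ x₀ := fun m => div_le_self hx₀.le (by linarith [m.cast_nonneg (α := ℝ)])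
  have hεlim : Tendsto ε atTop (𝓝 0) := by
    simpa [ε, div_eq_mul_inv] using tendsto_one_div_add_atTop_nhds_zero_nat.const_mul x₀
  obtain ⟨φ, hφ, Φ, hΦ⟩ := exists_subseq_tendstoUniformlyOn_of_asymptoticallyEquicontinuousOn
    (fun p hp => isBounded_range_repartitionPair hx₀ hk hε hp.2)
    fun C hCS hC => asymptoticallyEquicontinuousOn_repartitionPair hx₀ hk hε hεx₀ hεlim hC hCS
  refine ⟨ε ∘ φ, fun x y => (Φ (x, y)).1, fun x y => (Φ (x, y)).2, fun n => hε _,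
    hεlim.comp hφ.tendsto_atTop, fun R _ => ?_⟩
  have h := hΦ (Icc 0 R ×ˢ Icc x₀ R) (prod_mono Icc_subset_Ici_self Icc_subset_Ici_self)
    (isCompact_Icc.prod isCompact_Icc)
  exact ⟨uniformContinuous_fst.comp_tendstoUniformlyOn h,
    uniformContinuous_snd.comp_tendstoUniformlyOn h⟩

/-- Lemma A.7: under the structural assumptions on the fragmentation
coefficients together with the strengthened assumption
`|∑_{i' ≤ i}(k_{i',j+1} - k_{i',j})| ≤ K/j`, `k_{i,j} ≤ K/j`, and `ε n₀(ε) → x₀ > 0`,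
the repartition functions `F^ε(x,y) = ∫₀^x k^ε(z,y) dz` and their primitives
`G^ε(x,y) = ∫₀^x F^ε(z,y) dz` of the rescaled step kernels are uniformly bounded on
compact subsets of `[0,∞) × [x₀,∞)` and converge, along a subsequence `ε_n → 0`,
uniformly on every such compact set. -/
theorem repartition_function_compactness (K x₀ : ℝ) (hK : 0 < K) (hx₀ : 0 < x₀)
    (k : ℕ → ℕ → ℝ) (n₀ : ℝ → ℕ) (hn₀ : ∀ ε : ℝ, 0 < ε → 2 ≤ n₀ ε)
    (hk0 : ∀ i j, 0 ≤ k i j)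
    (hksupp : ∀ i j, j ≤ i → k i j = 0)
    (hksymm : ∀ i j, 1 ≤ i → i ≤ j - 1 → k i j = k (j - i) j)
    (hknorm : ∀ j, 2 ≤ j → ∑ i ∈ Finset.Ico 1 j, k i j = 1)
    (hkstrong1 : ∀ i j : ℕ,
      |∑ i' ∈ Finset.range (i + 1), (k i' (j + 1) - k i' j)| ≤ K / j)
    (hkstrong2 : ∀ i j : ℕ, k i j ≤ K / j)
    (hx₀lim : Tendsto (fun ε : ℝ => ε * (n₀ ε : ℝ)) (nhdsWithin 0 (Set.Ioi 0)) (𝓝 x₀)) :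
    (∀ R : ℝ, 0 < R → ∃ B : ℝ, ∀ ε : ℝ, 0 < ε →
      ∀ x ∈ Set.Icc (0:ℝ) R, ∀ y ∈ Set.Icc x₀ R,
        |∫ z in (0:ℝ)..x, k ⌊z / ε⌋₊ ⌊y / ε⌋₊ / ε| ≤ B ∧
        |∫ z in (0:ℝ)..x, ∫ w in (0:ℝ)..z, k ⌊w / ε⌋₊ ⌊y / ε⌋₊ / ε| ≤ B) ∧
    ∃ (εseq : ℕ → ℝ) (F G : ℝ → ℝ → ℝ),
      (∀ n, 0 < εseq n) ∧ Tendsto εseq atTop (𝓝 0) ∧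
      ∀ R : ℝ, 0 < R →
        TendstoUniformlyOn
          (fun n p => ∫ z in (0:ℝ)..p.1, k ⌊z / εseq n⌋₊ ⌊p.2 / εseq n⌋₊ / εseq n)
          (fun p : ℝ × ℝ => F p.1 p.2) atTop (Set.Icc 0 R ×ˢ Set.Icc x₀ R) ∧
        TendstoUniformlyOn
          (fun n p => ∫ z in (0:ℝ)..p.1,
            ∫ w in (0:ℝ)..z, k ⌊w / εseq n⌋₊ ⌊p.2 / εseq n⌋₊ / εseq n)
          (fun p : ℝ × ℝ => G p.1 p.2) atTop (Set.Icc 0 R ×ˢ Set.Icc x₀ R) :=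
  repartition_function_compactness_general K x₀ hx₀ k hk0 hkstrong1 hkstrong2
end
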